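/- arXiv:2110.04420 — 3 statements merged into one kernel-verified Lean document; each statement's English description precedes it below -/
import Mathlib

section
/- For a linear displacement field u(x) = A x + b with a constant 3×3 matrix A, the linearized LPS operator vanishes: 𝓛_LPS[u](x) = 0 for all x. (Linear patch test consistency at the continuum level.) -/
open MeasureTheory

local notation "E3" => EuclideanSpace ℝ (Fin 3)

/-- The linearized nonlocal dilatation. -/
noncomputable def nlDilatation (δ : ℝ) (κ : ℝ → ℝ) (m : ℝ) (u : E3 → E3) (x : E3) : ℝ :=
  (3 / m) * ∫ ζ in Metric.ball (0 : E3) δ, κ ‖ζ‖ * (inner ℝ ζ (u (x + ζ) - u x) : ℝ)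

/-- The linearized LPS (linear peridynamic solid) operator; note that
`(ξ ⊗ ξ / |ξ|²) v = (ξ·v / |ξ|²) ξ`. -/
noncomputable def LPS (δ : ℝ) (κ : ℝ → ℝ) (m K G : ℝ) (u : E3 → E3) (x : E3) : E3 :=
  ∫ ξ in Metric.ball (0 : E3) δ,
    (κ ‖ξ‖ / m) •
      (((3 * K - 5 * G) * (nlDilatation δ κ m u x + nlDilatation δ κ m u (x + ξ))) • ξ +
        ((30 * G / ‖ξ‖ ^ 2) * (inner ℝ ξ (u (x + ξ) - u x) : ℝ)) • ξ)

/-! For a linear field the increment `u (x + ξ) - u x = A ξ` does not depend on `x`, so the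
dilatation is constant and the LPS integrand is an odd function of the bond `ξ`; its integral over
the symmetric horizon vanishes. -/

section OddIntegral

variable {G F : Type*} [MeasurableSpace G] [AddGroup G] [MeasurableNeg G]
  [NormedAddCommGroup F] [NormedSpace ℝ F]

theorem integral_eq_zero_of_odd (μ : Measure G) [μ.IsNegInvariant] {f : G → F}
    (hf : ∀ x, f (-x) = -f x) : ∫ x, f x ∂μ = 0 := by
  have : IsAddTorsionFree F := .of_isTorsionFree ℝ F
  simp_rw [← self_eq_neg, ← integral_neg, ← hf, integral_neg_eq_self]

theorem setIntegral_eq_zero_of_odd (μ : Measure G) [μ.IsNegInvariant] {s : Set G}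
    (hs : MeasurableSet s) (hs_neg : -s = s) {f : G → F} (hf : ∀ x ∈ s, f (-x) = -f x) :
    ∫ x in s, f x ∂μ = 0 := by
  have hmem : ∀ x, -x ∈ s ↔ x ∈ s := fun x => by
    rw [← Set.mem_neg, hs_neg]
  rw [← integral_indicator hs]
  refine integral_eq_zero_of_odd μ fun x => ?_
  by_cases hx : x ∈ s
  · rw [Set.indicator_of_mem ((hmem x).mpr hx), Set.indicator_of_mem hx, hf x hx]
  · rw [Set.indicator_of_notMem (mt (hmem x).mp hx), Set.indicator_of_notMem hx, neg_zero]

end OddIntegral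

theorem nlDilatation_eq_of_add_sub_eq {δ : ℝ} {κ : ℝ → ℝ} {m : ℝ} {u g : E3 → E3}
    (hu : ∀ x ζ, u (x + ζ) - u x = g ζ) (x y : E3) :
    nlDilatation δ κ m u x = nlDilatation δ κ m u y := by
  simp only [nlDilatation, hu]

theorem LPS_of_linear_general (δ : ℝ) (κ : ℝ → ℝ) (m : ℝ) (K G : ℝ)
    (A : E3 →ₗ[ℝ] E3) (b : E3) (u : E3 → E3) (hu : ∀ x, u x = A x + b) :
    ∀ x, LPS δ κ m K G u x = 0 := by
  have hinc : ∀ x ζ, u (x + ζ) - u x = A ζ := fun x ζ => by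
    simp only [hu, map_add]; abel
  intro x
  have hθ : ∀ ξ, nlDilatation δ κ m u (x + ξ) = nlDilatation δ κ m u x :=
    fun ξ => nlDilatation_eq_of_add_sub_eq hinc _ _
  refine setIntegral_eq_zero_of_odd volume measurableSet_ball (by rw [neg_ball, neg_zero])
    fun ξ _ => ?_
  simp only [hinc, hθ, map_neg, inner_neg_neg, norm_neg, smul_neg, ← neg_add]

/-- Linear patch test consistency at the continuum level: the linearized LPS
operator vanishes on linear displacement fields `u x = A x + b`. -/
theorem LPS_of_linear (δ : ℝ) (hδ : 0 < δ) (κ : ℝ → ℝ) (hκ : ∀ r, 0 ≤ κ r)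
    (m : ℝ) (hm : m = ∫ ζ in Metric.ball (0 : E3) δ, κ ‖ζ‖ * ‖ζ‖ ^ 2) (hm_pos : 0 < m)
    (K G : ℝ) (hK : 0 < K) (hG : 0 < G)
    (A : E3 →ₗ[ℝ] E3) (b : E3) (u : E3 → E3) (hu : ∀ x, u x = A x + b) :
    ∀ x, LPS δ κ m K G u x = 0 :=
  LPS_of_linear_general δ κ m K G A b u hu
end

section
/- For a quadratic displacement field of the form u(x) = (x₁², 0, 0), the linearized nonlocal dilatation satisfies θ(x) = 2x₁ = ∇·u(x) for every x, independently of the horizon δ and the radial influence function κ. -/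
open MeasureTheory

local notation "E3" => EuclideanSpace ℝ (Fin 3)

/-! Along `ζ` the field changes by `((x₁ + ζ₁)² - x₁²) e₁`, so the integrand is
`2 x₁ κ(|ζ|) ζ₁² + κ(|ζ|) ζ₁³`. The cubic term is odd under `ζ ↦ -ζ` and integrates to zero over
the ball. The ball and the radial weight are invariant under swapping coordinates, so the three
second moments `∫ κ(|ζ|) ζᵢ²` agree and sum to `m`; hence each is `m / 3` and `θ(x) = 2 x₁`. -/

open Metric

section Symmetry

variable {E F : Type*} [NormedAddCommGroup E] [InnerProductSpace ℝ E] [FiniteDimensional ℝ E]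
  [MeasurableSpace E] [BorelSpace E] [NormedAddCommGroup F] [NormedSpace ℝ F]

theorem setIntegral_ball_comp_linearIsometryEquiv (e : E ≃ₗᵢ[ℝ] E) (r : ℝ) (f : E → F) :
    ∫ ζ in ball 0 r, f (e ζ) = ∫ ζ in ball 0 r, f ζ := by
  have hball : e ⁻¹' ball 0 r = ball 0 r := by
    simpa only [map_zero] using e.isometry.preimage_ball 0 r
  simpa only [hball] using
    e.measurePreserving.setIntegral_preimage_emb e.toHomeomorph.measurableEmbedding f (ball 0 r)

theorem setIntegral_ball_eq_zero_of_odd {f : E → F} (hf : ∀ ζ, f (-ζ) = -f ζ) (r : ℝ) :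
    ∫ ζ in ball 0 r, f ζ = 0 := by
  have h := setIntegral_ball_comp_linearIsometryEquiv (LinearIsometryEquiv.neg ℝ) r f
  simp only [LinearIsometryEquiv.coe_neg, hf, integral_neg] at h
  have h2 : (2 : ℝ) • ∫ ζ in ball 0 r, f ζ = 0 := by
    rw [two_smul]; nth_rw 1 [← h]; exact neg_add_cancel _
  exact (smul_eq_zero.mp h2).resolve_left two_ne_zero

end Symmetry

section Moments

variable {ι : Type*} [Fintype ι]

theorem setIntegral_ball_radial_mul_sq_apply_eq (w : ℝ → ℝ) (r : ℝ) (i j : ι) :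
    ∫ ζ in ball (0 : EuclideanSpace ℝ ι) r, w ‖ζ‖ * ζ i ^ 2 =
      ∫ ζ in ball (0 : EuclideanSpace ℝ ι) r, w ‖ζ‖ * ζ j ^ 2 := by
  classical
  let e := LinearIsometryEquiv.piLpCongrLeft 2 ℝ ℝ (Equiv.swap i j)
  have he : ∀ ζ : EuclideanSpace ℝ ι, e ζ i = ζ j := fun ζ => by
    simp [e, Equiv.piCongrLeft']
  rw [← setIntegral_ball_comp_linearIsometryEquiv e]
  simp only [e.norm_map, he]

theorem MeasureTheory.IntegrableOn.mul_sq_apply {w : EuclideanSpace ℝ ι → ℝ}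
    {s : Set (EuclideanSpace ℝ ι)} (h : IntegrableOn (fun ζ => w ζ * ‖ζ‖ ^ 2) s) (i : ι) :
    IntegrableOn (fun ζ => w ζ * ζ i ^ 2) s := by
  have hbound : ∀ ζ : EuclideanSpace ℝ ι, ‖ζ i ^ 2 / ‖ζ‖ ^ 2‖ ≤ 1 := fun ζ => by
    rw [norm_div, norm_pow, norm_pow, norm_norm]
    exact div_le_one_of_le₀ (pow_le_pow_left₀ (norm_nonneg _) (PiLp.norm_apply_le ζ i) 2)
      (by positivity)
  have hmeas : Measurable fun ζ : EuclideanSpace ℝ ι => ζ i ^ 2 / ‖ζ‖ ^ 2 := by fun_prop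
  -- at `ζ = 0` both sides vanish, the quotient by the convention `0 / 0 = 0`
  refine (h.mul_bdd hmeas.aestronglyMeasurable (ae_of_all _ hbound)).congr
    (ae_of_all _ fun ζ => ?_)
  rcases eq_or_ne ζ 0 with rfl | hζ
  · simp
  · field_simp [norm_ne_zero_iff.mpr hζ]

theorem card_mul_setIntegral_ball_radial_mul_sq_apply (w : ℝ → ℝ) {r : ℝ}
    (h : IntegrableOn (fun ζ : EuclideanSpace ℝ ι => w ‖ζ‖ * ‖ζ‖ ^ 2) (ball 0 r)) (i : ι) :
    Fintype.card ι * ∫ ζ in ball (0 : EuclideanSpace ℝ ι) r, w ‖ζ‖ * ζ i ^ 2 =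
      ∫ ζ in ball (0 : EuclideanSpace ℝ ι) r, w ‖ζ‖ * ‖ζ‖ ^ 2 := by
  simp_rw [EuclideanSpace.norm_sq_eq, Real.norm_eq_abs, sq_abs, Finset.mul_sum]
  rw [integral_finsetSum _ fun j _ => h.mul_sq_apply j]
  simp [setIntegral_ball_radial_mul_sq_apply_eq w r _ i]

end Moments

theorem dilatation_of_quadratic_field_general (δ : ℝ) (κ : ℝ → ℝ)
    (hint : IntegrableOn (fun ζ : E3 => κ ‖ζ‖ * ‖ζ‖ ^ 2) (Metric.ball (0 : E3) δ))
    (m : ℝ) (hm : m = ∫ ζ in Metric.ball (0 : E3) δ, κ ‖ζ‖ * ‖ζ‖ ^ 2) (hm_pos : 0 < m)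
    (u : E3 → E3) (hu : ∀ x, u x = (x 0) ^ 2 • EuclideanSpace.single (0 : Fin 3) (1 : ℝ)) :
    ∀ x, nlDilatation δ κ m u x = 2 * x 0 := by
  intro x
  have hsecond : IntegrableOn (fun ζ : E3 => κ ‖ζ‖ * ζ 0 ^ 2) (ball 0 δ) := hint.mul_sq_apply 0
  have hthird : IntegrableOn (fun ζ : E3 => ζ 0 * (κ ‖ζ‖ * ζ 0 ^ 2)) (ball 0 δ) :=
    hsecond.continuousOn_mul_of_subset (by fun_prop) (isCompact_closedBall 0 δ)
      measurableSet_ball ball_subset_closedBall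
  have hodd : ∫ ζ in ball (0 : E3) δ, ζ 0 * (κ ‖ζ‖ * ζ 0 ^ 2) = 0 :=
    setIntegral_ball_eq_zero_of_odd (fun ζ => by simp only [PiLp.neg_apply, norm_neg]; ring) δ
  have hmoment : ∫ ζ in ball (0 : E3) δ, κ ‖ζ‖ * ζ 0 ^ 2 = m / 3 := by
    rw [hm, ← card_mul_setIntegral_ball_radial_mul_sq_apply κ hint 0]
    simp
  have hintegrand : ∀ ζ : E3, κ ‖ζ‖ * inner ℝ ζ (u (x + ζ) - u x) =
      2 * x 0 * (κ ‖ζ‖ * ζ 0 ^ 2) + ζ 0 * (κ ‖ζ‖ * ζ 0 ^ 2) := fun ζ => by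
    simp only [hu, ← sub_smul, real_inner_smul_right, EuclideanSpace.inner_single_right,
      PiLp.add_apply, conj_trivial]
    ring
  rw [nlDilatation, integral_congr_ae (ae_of_all _ hintegrand),
    integral_add (hsecond.const_mul _) hthird, integral_const_mul, hodd, hmoment]
  field_simp [hm_pos.ne']
  ring

/-- For the quadratic displacement field `u x = (x₁², 0, 0)`, the linearized
nonlocal dilatation equals `2 x₁ = ∇·u(x)` everywhere, for any horizon `δ` and
any nonnegative integrable radial influence function `κ`. -/
theorem dilatation_of_quadratic_field (δ : ℝ) (hδ : 0 < δ) (κ : ℝ → ℝ)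
    (hκ : ∀ r, 0 ≤ κ r)
    (hint : IntegrableOn (fun ζ : E3 => κ ‖ζ‖ * ‖ζ‖ ^ 2) (Metric.ball (0 : E3) δ))
    (m : ℝ) (hm : m = ∫ ζ in Metric.ball (0 : E3) δ, κ ‖ζ‖ * ‖ζ‖ ^ 2) (hm_pos : 0 < m)
    (u : E3 → E3) (hu : ∀ x, u x = (x 0) ^ 2 • EuclideanSpace.single (0 : Fin 3) (1 : ℝ)) :
    ∀ x, nlDilatation δ κ m u x = 2 * x 0 :=
  dilatation_of_quadratic_field_general δ κ hint m hm hm_pos u hu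
end

section
/- Nonlocal Poincaré-type coercivity on a segment: if u : ℝ → ℝ is measurable, vanishes outside a bounded interval ω, and satisfies ∫∫_{|ξ|<δ} (u(x+ξ) − u(x))² dξ dx = 0, then u = 0 almost everywhere. Consequently, the LPS energy vanishing on a displacement extended by zero into the interaction layer forces the displacement to vanish. -/
/-!
Since `u ∈ L²`, the integrand `(u (x + ξ) - u x) ^ 2` is integrable on `ℝ × (-δ, δ)`, so a vanishing
energy forces `u (x + ξ) = u x` for a.e. `x` and a.e. `ξ ∈ (0, δ)`. For such a function, being a.e.
equal to `c` on `(t, ∞)` propagates to `(t - δ, ∞)`: from `x ∈ (t - δ, t]` a set of positive measure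
of steps `ξ ∈ (t - x, δ)` lands in `(t, ∞)`. Starting from `t = b`, the zero set of `u` spreads down
in steps of `δ` and exhausts `ℝ`.
-/

open MeasureTheory Set

lemma ae_ae_eq_zero_of_integral_integral_eq_zero {α β : Type*} [MeasurableSpace α]
    [MeasurableSpace β] {μ : Measure α} {ν : Measure β} [SFinite μ] [SFinite ν]
    {F : α × β → ℝ} (hF : Integrable F (μ.prod ν)) (hF_nonneg : 0 ≤ F)
    (h : ∫ x, ∫ y, F (x, y) ∂ν ∂μ = 0) : ∀ᵐ x ∂μ, ∀ᵐ y ∂ν, F (x, y) = 0 := by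
  rw [← integral_prod F hF, integral_eq_zero_iff_of_nonneg hF_nonneg hF] at h
  exact Measure.ae_ae_of_ae_prod h

lemma MeasureTheory.MemLp.comp_add_prod {G E : Type*} [MeasurableSpace G] [AddGroup G]
    [MeasurableAdd₂ G] {μ ν : Measure G} [SFinite μ] [IsFiniteMeasure ν]
    [μ.IsAddRightInvariant] [NormedAddCommGroup E] {f : G → E} {p : ENNReal}
    (hf : MemLp f p μ) : MemLp (fun z : G × G => f (z.1 + z.2)) p (μ.prod ν) :=
  (hf.comp_fst ν).comp_measurePreserving (measurePreserving_add_prod μ ν)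

section TranslationChain

variable {α : Type*} {g : ℝ → α} {δ t : ℝ} {c : α}

lemma ae_eq_on_Ioi_sub_of_ae_eq_on_Ioi
    (hg : ∀ᵐ x, ∀ᵐ ξ ∂volume.restrict (Ioo 0 δ), g (x + ξ) = g x)
    (ht : ∀ᵐ x, t < x → g x = c) : ∀ᵐ x, t - δ < x → g x = c := by
  have ht_shift (x : ℝ) : ∀ᵐ ξ, t < x + ξ → g (x + ξ) = c :=
    (measurePreserving_add_left volume x).quasiMeasurePreserving.ae ht
  filter_upwards [hg, ht] with x hx hxt hlt
  rcases lt_or_ge t x with hgt | hle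
  · exact hxt hgt
  have : (ae (volume.restrict (Ioo (t - x) δ))).NeBot := by
    rw [ae_restrict_neBot, Real.volume_Ioo]
    simp only [ne_eq, ENNReal.ofReal_eq_zero, not_le]
    linarith
  obtain ⟨ξ, ⟨hξ, hξ_shift⟩, hξ_mem⟩ :=
    (((ae_restrict_of_ae_restrict_of_subset (Ioo_subset_Ioo_left (sub_nonneg.2 hle)) hx).and
      (ae_restrict_of_ae (ht_shift x))).and (ae_restrict_mem measurableSet_Ioo)).exists
  rw [← hξ]
  exact hξ_shift (by linarith [hξ_mem.1])

lemma ae_eq_const_of_ae_eq_on_Ioi (hδ : 0 < δ)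
    (hg : ∀ᵐ x, ∀ᵐ ξ ∂volume.restrict (Ioo 0 δ), g (x + ξ) = g x)
    (ht : ∀ᵐ x, t < x → g x = c) : ∀ᵐ x, g x = c := by
  have h_chain (n : ℕ) : ∀ᵐ x, t - n * δ < x → g x = c := by
    induction n with
    | zero => simpa using ht
    | succ n ih => simpa [add_mul, sub_add_eq_sub_sub] using ae_eq_on_Ioi_sub_of_ae_eq_on_Ioi hg ih
  filter_upwards [ae_all_iff.2 h_chain] with x hx
  obtain ⟨n, hn⟩ := exists_nat_gt ((t - x) / δ)
  rw [div_lt_iff₀ hδ] at hn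
  exact hx n (by linarith)

end TranslationChain

theorem nonlocal_poincare_segment_general (δ : ℝ) (hδ : 0 < δ)
    (u : ℝ → ℝ) (huL2 : MemLp u 2 volume)
    (a b : ℝ) (hsupp : Function.support u ⊆ Set.Icc a b)
    (henergy : (∫ x : ℝ, ∫ ξ in Set.Ioo (-δ) δ, (u (x + ξ) - u x) ^ 2) = 0) :
    u =ᵐ[volume] 0 := by
  have h_diff : MemLp (fun z : ℝ × ℝ => u (z.1 + z.2) - u z.1) 2
      (volume.prod (volume.restrict (Ioo (-δ) δ))) :=
    huL2.comp_add_prod.sub (huL2.comp_fst _)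
  have h_zero := ae_ae_eq_zero_of_integral_integral_eq_zero h_diff.integrable_sq
    (fun _ => sq_nonneg _) henergy
  have h_const : ∀ᵐ x, ∀ᵐ ξ ∂volume.restrict (Ioo 0 δ), u (x + ξ) = u x := by
    filter_upwards [h_zero] with x hx
    filter_upwards [ae_restrict_of_ae_restrict_of_subset (Ioo_subset_Ioo_left (by linarith)) hx]
      with ξ hξ
    exact sub_eq_zero.1 (pow_eq_zero_iff two_ne_zero |>.1 hξ)
  refine ae_eq_const_of_ae_eq_on_Ioi hδ h_const (t := b) (ae_of_all _ fun x hx => ?_)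
  by_contra hux
  exact (hsupp hux).2.not_gt hx

/-- Nonlocal Poincaré-type coercivity on a segment: if `u ∈ L²(ℝ)` vanishes
outside a bounded interval and its nonlocal energy
`∫∫_{|ξ|<δ} (u(x+ξ) − u(x))² dξ dx` vanishes, then `u = 0` almost everywhere. -/
theorem nonlocal_poincare_segment (δ : ℝ) (hδ : 0 < δ)
    (u : ℝ → ℝ) (humeas : Measurable u) (huL2 : MemLp u 2 volume)
    (a b : ℝ) (hsupp : Function.support u ⊆ Set.Icc a b)
    (henergy : (∫ x : ℝ, ∫ ξ in Set.Ioo (-δ) δ, (u (x + ξ) - u x) ^ 2) = 0) :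
    u =ᵐ[volume] 0 :=
  nonlocal_poincare_segment_general δ hδ u huL2 a b hsupp henergy
end
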